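/- arXiv:1712.04210 — 5 statements merged into one kernel-verified Lean document; each statement's English description precedes it below -/
import Mathlib

section
/- Let ρ, b, σ, c* be positive real numbers, let k ∈ ℝ satisfy k² + (1 + 2b/σ²)k − 2ρ/σ² = 0, and set b̃ = 2(k + 1 + b/σ²). Suppose 𝒥 : (0,∞) → ℝ is twice differentiable and satisfies the degenerate hypergeometric equation y·𝒥''(y) + (b̃ − y)·𝒥'(y) − k·𝒥(y) = 0 for all y > 0. Then the function w(x) = x^{−k}·𝒥(2(1+c*)/(σ² x)) is twice differentiable on (0,∞) and satisfies ρ·w(x) + (b x − (1+c*))·w'(x) − (1/2)σ² x²·w''(x) = 0 for all x > 0. -/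
open Real Set Filter

/-!
Put `y = A / x` with `A = 2(1 + c*)/σ²`. The Euler operator `x d/dx` sends `x^m f(A/x)` to
`x^m (m f - y f')(y)`, so `w`, `x w'` and `x² w''` are `x^{-k}` times combinations of `𝒥`, `y 𝒥'`,
`y² 𝒥''`, while `(1 + c*) w' = (σ²/2) y · x w'`. Collecting terms, the left side of the ODE for `w`
is `-(σ²/2) x^{-k} ((k² + (1 + 2b/σ²)k - 2ρ/σ²) 𝒥 + y (y 𝒥'' + (b̃ - y) 𝒥' - k 𝒥))` at `y`.
-/

section InversionTransform

variable {f : ℝ → ℝ} {m A t : ℝ}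

theorem hasDerivAt_rpow_mul_comp_div {f' : ℝ} (ht : 0 < t) (hf : HasDerivAt f f' (A / t)) :
    HasDerivAt (fun s => s ^ m * f (A / s)) (t ^ (m - 1) * (m * f (A / t) - A / t * f')) t := by
  have hinv : HasDerivAt (fun s => A / s) (A * -(t ^ 2)⁻¹) t := by
    simpa only [div_eq_mul_inv] using (hasDerivAt_inv ht.ne').const_mul A
  refine ((hasDerivAt_rpow_const (p := m) (Or.inl ht.ne')).mul (hf.comp t hinv)).congr_deriv ?_
  rw [rpow_sub_one ht.ne', Function.comp_apply]
  field_simp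
  ring

theorem eqOn_deriv_rpow_mul_comp_div (hf : ∀ s > 0, DifferentiableAt ℝ f (A / s)) :
    EqOn (deriv fun s => s ^ m * f (A / s))
      (fun s => s ^ (m - 1) * (m * f (A / s) - A / s * deriv f (A / s))) (Ioi 0) :=
  fun s hs => (hasDerivAt_rpow_mul_comp_div hs (hf s hs).hasDerivAt).deriv

theorem hasDerivAt_deriv_rpow_mul_comp_div (ht : 0 < t)
    (hf : ∀ s > 0, DifferentiableAt ℝ f (A / s)) (hf' : DifferentiableAt ℝ (deriv f) (A / t)) :
    HasDerivAt (deriv fun s => s ^ m * f (A / s))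
      (t ^ (m - 2) * (m * (m - 1) * f (A / t) - 2 * (m - 1) * (A / t) * deriv f (A / t)
        + (A / t) ^ 2 * deriv (deriv f) (A / t))) t := by
  have hF : HasDerivAt (fun y => m * f y - y * deriv f y)
      (m * deriv f (A / t) - (deriv f (A / t) + A / t * deriv (deriv f) (A / t))) (A / t) := by
    exact (((hf t ht).hasDerivAt.const_mul m).sub
      ((hasDerivAt_id' _).mul hf'.hasDerivAt)).congr_deriv (by ring)
  -- near `t`, the first derivative is `s ^ (m - 1) * F (A / s)` with `F` as in `hF`
  have hderiv := hasDerivAt_rpow_mul_comp_div (m := m - 1) ht hF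
  rw [show m - 1 - 1 = m - 2 by ring] at hderiv
  refine (hderiv.congr_of_eventuallyEq ?_).congr_deriv (by ring)
  exact eventually_of_mem (isOpen_Ioi.mem_nhds ht) (eqOn_deriv_rpow_mul_comp_div hf)

end InversionTransform

theorem tricomi_transform_solves_linearized_ode_general
    (ρ b σ cstar k btilde : ℝ)
    (hσ : 0 < σ) (hcstar : 0 < cstar)
    (hroot : k ^ 2 + (1 + 2 * b / σ ^ 2) * k - 2 * ρ / σ ^ 2 = 0)
    (hbt : btilde = 2 * (k + 1 + b / σ ^ 2))
    (J : ℝ → ℝ)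
    (hJ : ∀ y > (0:ℝ), DifferentiableAt ℝ J y)
    (hJ' : ∀ y > (0:ℝ), DifferentiableAt ℝ (deriv J) y)
    (hJode : ∀ y > (0:ℝ),
      y * deriv (deriv J) y + (btilde - y) * deriv J y - k * J y = 0)
    (w : ℝ → ℝ)
    (hw : ∀ x, w x = x ^ (-k) * J (2 * (1 + cstar) / (σ ^ 2 * x))) :
    ∀ x > (0:ℝ), DifferentiableAt ℝ w x ∧ DifferentiableAt ℝ (deriv w) x ∧
      ρ * w x + (b * x - (1 + cstar)) * deriv w x
        - (1 / 2) * σ ^ 2 * x ^ 2 * deriv (deriv w) x = 0 := by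
  subst hbt
  intro x hx
  set A := 2 * (1 + cstar) / σ ^ 2 with hA
  have hw_eq : w = fun s => s ^ (-k) * J (A / s) := funext fun s => by rw [hw, div_div]
  have hJA : ∀ s > 0, DifferentiableAt ℝ J (A / s) := fun s hs => hJ _ (by positivity)
  have hw' := hasDerivAt_rpow_mul_comp_div (m := -k) hx (hJA x hx).hasDerivAt
  have hw'' := hasDerivAt_deriv_rpow_mul_comp_div (m := -k) hx hJA (hJ' _ (by positivity))
  rw [← hw_eq] at hw' hw''
  refine ⟨hw'.differentiableAt, hw''.differentiableAt, ?_⟩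
  have hode := hJode (A / x) (by positivity)
  have hσA : σ ^ 2 * A = 2 * (1 + cstar) := by rw [hA]; field_simp
  rw [congrFun hw_eq x, hw'.deriv, hw''.deriv, rpow_sub_one hx.ne', rpow_sub hx, rpow_two]
  linear_combination (norm := (field_simp; ring))
    (-(σ ^ 2 / 2) * x ^ (-k) * J (A / x)) * hroot - (σ ^ 2 / 2 * (A / x) * x ^ (-k)) * hode
      + (x ^ (-k) / x * (-k * J (A / x) - A / x * deriv J (A / x)) / 2) * hσA

/-- The change of variables `w(x) = x^{-k} 𝒥(2(1+c*)/(σ²x))` transforms a solution `𝒥` of the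
degenerate hypergeometric equation into a solution of the linearized shallow lake ODE. -/
theorem tricomi_transform_solves_linearized_ode
    (ρ b σ cstar k btilde : ℝ)
    (hρ : 0 < ρ) (hb : 0 < b) (hσ : 0 < σ) (hcstar : 0 < cstar)
    (hroot : k ^ 2 + (1 + 2 * b / σ ^ 2) * k - 2 * ρ / σ ^ 2 = 0)
    (hbt : btilde = 2 * (k + 1 + b / σ ^ 2))
    (J : ℝ → ℝ)
    (hJ : ∀ y > (0:ℝ), DifferentiableAt ℝ J y)
    (hJ' : ∀ y > (0:ℝ), DifferentiableAt ℝ (deriv J) y)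
    (hJode : ∀ y > (0:ℝ),
      y * deriv (deriv J) y + (btilde - y) * deriv J y - k * J y = 0)
    (w : ℝ → ℝ)
    (hw : ∀ x, w x = x ^ (-k) * J (2 * (1 + cstar) / (σ ^ 2 * x))) :
    ∀ x > (0:ℝ), DifferentiableAt ℝ w x ∧ DifferentiableAt ℝ (deriv w) x ∧
      ρ * w x + (b * x - (1 + cstar)) * deriv w x
        - (1 / 2) * σ ^ 2 * x ^ 2 * deriv (deriv w) x = 0 :=
  tricomi_transform_solves_linearized_ode_general ρ b σ cstar k btilde hσ hcstar hroot hbt J hJ hJ'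
    hJode w hw
end

section
/- Let 0 ≤ x₀ ≤ y₀, let Z : [0,∞) → (0,∞) be continuous, let u₁, u₂ : [0,∞) → [0,∞) be locally integrable with u₁(t) ≤ u₂(t) for all t ≥ 0, and let x, y : [0,∞) → ℝ be continuous and satisfy, for every t ≥ 0, x(t) = x₀·Z(t) + ∫₀ᵗ (Z(t)/Z(s))·(u₁(s) + x(s)²/(1 + x(s)²)) ds and y(t) = y₀·Z(t) + ∫₀ᵗ (Z(t)/Z(s))·(u₂(s) + y(s)²/(1 + y(s)²)) ds. Then y(t) − x(t) ≥ (y₀ − x₀)·Z(t) for all t ≥ 0. -/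
open Real Set MeasureTheory intervalIntegral

lemma g_mono {a b : ℝ} (ha : 0 ≤ a) (hab : a ≤ b) :
    a ^ 2 / (1 + a ^ 2) ≤ b ^ 2 / (1 + b ^ 2) := by
  have h1 : (0:ℝ) < 1 + a ^ 2 := by positivity
  have h2 : (0:ℝ) < 1 + b ^ 2 := by positivity
  rw [div_le_div_iff₀ h1 h2]
  nlinarith [sq_nonneg (a*b), mul_nonneg ha (hab.trans' ha)]

lemma g_lip {a b : ℝ} (ha : 0 ≤ a) (hb : 0 ≤ b) :
    a ^ 2 / (1 + a ^ 2) - b ^ 2 / (1 + b ^ 2) ≤ max (a - b) 0 := by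
  rcases le_total a b with h | h
  · have := g_mono ha h
    have h0 : a ^ 2 / (1 + a ^ 2) - b ^ 2 / (1 + b ^ 2) ≤ 0 := by linarith
    exact h0.trans (le_max_right _ _)
  · have h1 : (0:ℝ) < 1 + a ^ 2 := by positivity
    have h2 : (0:ℝ) < 1 + b ^ 2 := by positivity
    have key : a ^ 2 / (1 + a ^ 2) - b ^ 2 / (1 + b ^ 2) ≤ a - b := by
      rw [div_sub_div _ _ h1.ne' h2.ne', div_le_iff₀ (by positivity)]
      nlinarith [sq_nonneg (a-1), sq_nonneg (b-1), sq_nonneg (a*b), mul_nonneg (sub_nonneg.2 h) (sq_nonneg (a-1)), mul_nonneg (sub_nonneg.2 h) (sq_nonneg (b-1)), mul_nonneg (sub_nonneg.2 h) (sq_nonneg (a*b))]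
    exact key.trans (le_max_left _ _)

/-- Pathwise comparison for the shallow lake dynamics: larger initial condition and larger
control yield a state dominating the other by at least `(y₀ − x₀) Z(t)`. -/
theorem shallow_lake_comparison_of_states
    (x₀ y₀ : ℝ) (hx₀ : 0 ≤ x₀) (hxy₀ : x₀ ≤ y₀)
    (Z : ℝ → ℝ) (hZcont : ContinuousOn Z (Ici 0)) (hZpos : ∀ t ∈ Ici (0:ℝ), 0 < Z t)
    (u₁ u₂ : ℝ → ℝ)
    (hu₁_nonneg : ∀ t ∈ Ici (0:ℝ), 0 ≤ u₁ t) (hu₂_nonneg : ∀ t ∈ Ici (0:ℝ), 0 ≤ u₂ t)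
    (hu₁_loc : LocallyIntegrableOn u₁ (Ici 0)) (hu₂_loc : LocallyIntegrableOn u₂ (Ici 0))
    (hu_le : ∀ t ∈ Ici (0:ℝ), u₁ t ≤ u₂ t)
    (x y : ℝ → ℝ) (hx_cont : ContinuousOn x (Ici 0)) (hy_cont : ContinuousOn y (Ici 0))
    (hx_eq : ∀ t ∈ Ici (0:ℝ),
      x t = x₀ * Z t + ∫ s in (0:ℝ)..t, (Z t / Z s) * (u₁ s + x s ^ 2 / (1 + x s ^ 2)))
    (hy_eq : ∀ t ∈ Ici (0:ℝ),
      y t = y₀ * Z t + ∫ s in (0:ℝ)..t, (Z t / Z s) * (u₂ s + y s ^ 2 / (1 + y s ^ 2))) :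
    ∀ t ∈ Ici (0:ℝ), (y₀ - x₀) * Z t ≤ y t - x t := by
  -- nonnegativity of x
  have hx_nonneg : ∀ s ∈ Ici (0:ℝ), 0 ≤ x s := by
    intro s hs
    rw [hx_eq s hs]
    have h1 : 0 ≤ x₀ * Z s := mul_nonneg hx₀ (hZpos s hs).le
    have h2 : 0 ≤ ∫ σ in (0:ℝ)..s, (Z s / Z σ) * (u₁ σ + x σ ^ 2 / (1 + x σ ^ 2)) := by
      refine intervalIntegral.integral_nonneg hs fun σ hσ => ?_
      exact mul_nonneg (div_nonneg (hZpos s hs).le (hZpos σ hσ.1).le)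
        (add_nonneg (hu₁_nonneg σ hσ.1) (by positivity))
    linarith
  have hy₀ : 0 ≤ y₀ := hx₀.trans hxy₀
  have hy_nonneg : ∀ s ∈ Ici (0:ℝ), 0 ≤ y s := by
    intro s hs
    rw [hy_eq s hs]
    have h1 : 0 ≤ y₀ * Z s := mul_nonneg hy₀ (hZpos s hs).le
    have h2 : 0 ≤ ∫ σ in (0:ℝ)..s, (Z s / Z σ) * (u₂ σ + y σ ^ 2 / (1 + y σ ^ 2)) := by
      refine intervalIntegral.integral_nonneg hs fun σ hσ => ?_
      exact mul_nonneg (div_nonneg (hZpos s hs).le (hZpos σ hσ.1).le)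
        (add_nonneg (hu₂_nonneg σ hσ.1) (by positivity))
    linarith
  -- integrability helper
  have hInt : ∀ (u w : ℝ → ℝ), LocallyIntegrableOn u (Ici 0) → ContinuousOn w (Ici 0) →
      ∀ t ∈ Ici (0:ℝ),
        IntervalIntegrable (fun s => Z t / Z s * (u s + w s ^ 2 / (1 + w s ^ 2))) volume 0 t := by
    intro u w hu hw t ht
    have hIcc : Icc (0:ℝ) t ⊆ Ici 0 := Icc_subset_Ici_self
    have hZc : ContinuousOn (fun s => Z t / Z s) (Icc 0 t) :=
      continuousOn_const.div (hZcont.mono hIcc) fun s hs => (hZpos s (hIcc hs)).ne'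
    obtain ⟨s₀, hs₀, hmax⟩ := isCompact_Icc.exists_isMaxOn (nonempty_Icc.2 ht) hZc
    have h1 : IntegrableOn (fun s => Z t / Z s * u s) (Icc 0 t) := by
      refine Integrable.bdd_mul (c := Z t / Z s₀)
        (hu.integrableOn_compact_subset hIcc isCompact_Icc)
        (hZc.aestronglyMeasurable measurableSet_Icc) ?_
      refine Filter.eventually_of_mem (self_mem_ae_restrict measurableSet_Icc) fun s hs => ?_
      rw [Real.norm_eq_abs, abs_of_nonneg (div_nonneg (hZpos t ht).le (hZpos s (hIcc hs)).le)]
      exact hmax hs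
    have h2 : IntegrableOn (fun s => Z t / Z s * (w s ^ 2 / (1 + w s ^ 2))) (Icc 0 t) := by
      refine (hZc.mul ?_).integrableOn_compact isCompact_Icc
      exact ((hw.mono hIcc).pow 2).div (continuousOn_const.add ((hw.mono hIcc).pow 2))
        fun s _ => by positivity
    have h3 : IntegrableOn (fun s => Z t / Z s * (u s + w s ^ 2 / (1 + w s ^ 2))) (Icc 0 t) := by
      have heq : (fun s => Z t / Z s * (u s + w s ^ 2 / (1 + w s ^ 2)))
          = fun s => Z t / Z s * u s + Z t / Z s * (w s ^ 2 / (1 + w s ^ 2)) := by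
        funext s; ring
      rw [heq]; exact h1.add h2
    rw [intervalIntegrable_iff_integrableOn_Icc_of_le ht]
    exact h3
  intro T hT
  have hIccT : Icc (0:ℝ) T ⊆ Ici 0 := Icc_subset_Ici_self
  obtain ⟨sm, hsm, hminZ⟩ := isCompact_Icc.exists_isMinOn (nonempty_Icc.2 hT) (hZcont.mono hIccT)
  obtain ⟨sM, hsM, hmaxZ⟩ := isCompact_Icc.exists_isMaxOn (nonempty_Icc.2 hT) (hZcont.mono hIccT)
  have hm : 0 < Z sm := hZpos sm (hIccT hsm)
  set C : ℝ := Z sM / Z sm with hCdef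
  have hC : 0 ≤ C := div_nonneg (hZpos sM (hIccT hsM)).le hm.le
  set d : ℝ → ℝ := fun s => max (x s - y s) 0 with hddef
  have hd0 : ∀ s, 0 ≤ d s := fun s => le_max_right _ _
  have hd_cont : ContinuousOn d (Icc 0 T) :=
    (continuous_id.max continuous_const).comp_continuousOn
      ((hx_cont.mono hIccT).sub (hy_cont.mono hIccT))
  -- bound on Z t / Z s
  have hZbound : ∀ t ∈ Icc (0:ℝ) T, ∀ s ∈ Icc (0:ℝ) T, Z t / Z s ≤ C := by
    intro t ht s hs
    exact div_le_div₀ (hZpos sM (hIccT hsM)).le (hmaxZ ht) hm (hminZ hs)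
  -- key integral inequality
  have key : ∀ t ∈ Icc (0:ℝ) T, x t - y t ≤ ∫ s in (0:ℝ)..t, C * d s := by
    intro t ht
    have ht0 : t ∈ Ici (0:ℝ) := ht.1
    have hI1 := hInt u₁ x hu₁_loc hx_cont t ht0
    have hI2 := hInt u₂ y hu₂_loc hy_cont t ht0
    have hsub : x t - y t = (x₀ - y₀) * Z t
        + ∫ s in (0:ℝ)..t, (Z t / Z s * (u₁ s + x s ^ 2 / (1 + x s ^ 2))
            - Z t / Z s * (u₂ s + y s ^ 2 / (1 + y s ^ 2))) := by
      rw [intervalIntegral.integral_sub hI1 hI2, hx_eq t ht0, hy_eq t ht0]; ring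
    have hdint : IntervalIntegrable (fun s => C * d s) volume 0 t := by
      refine ContinuousOn.intervalIntegrable ?_
      rw [uIcc_of_le ht.1]
      exact continuousOn_const.mul (hd_cont.mono (Icc_subset_Icc_right ht.2))
    have hmono : (∫ s in (0:ℝ)..t, (Z t / Z s * (u₁ s + x s ^ 2 / (1 + x s ^ 2))
          - Z t / Z s * (u₂ s + y s ^ 2 / (1 + y s ^ 2))))
        ≤ ∫ s in (0:ℝ)..t, C * d s := by
      refine intervalIntegral.integral_mono_on ht.1 (hI1.sub hI2) hdint fun s hs => ?_
      have hsT : s ∈ Icc (0:ℝ) T := ⟨hs.1, hs.2.trans ht.2⟩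
      have hs0 : s ∈ Ici (0:ℝ) := hs.1
      have hZts : 0 < Z t / Z s := div_pos (hZpos t ht0) (hZpos s hs0)
      have hgle : x s ^ 2 / (1 + x s ^ 2) - y s ^ 2 / (1 + y s ^ 2) ≤ d s :=
        g_lip (hx_nonneg s hs0) (hy_nonneg s hs0)
      have hZleC : Z t / Z s ≤ C := hZbound t ht s hsT
      have step1 : Z t / Z s * (u₁ s + x s ^ 2 / (1 + x s ^ 2))
          - Z t / Z s * (u₂ s + y s ^ 2 / (1 + y s ^ 2))
          ≤ Z t / Z s * (x s ^ 2 / (1 + x s ^ 2) - y s ^ 2 / (1 + y s ^ 2)) := by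
        have hu := hu_le s hs0
        nlinarith [hZts]
      have step2 : Z t / Z s * (x s ^ 2 / (1 + x s ^ 2) - y s ^ 2 / (1 + y s ^ 2)) ≤ C * d s := by
        rcases le_total (x s ^ 2 / (1 + x s ^ 2) - y s ^ 2 / (1 + y s ^ 2)) 0 with hc | hc
        · have : Z t / Z s * (x s ^ 2 / (1 + x s ^ 2) - y s ^ 2 / (1 + y s ^ 2)) ≤ 0 :=
            mul_nonpos_iff.mpr (Or.inl ⟨hZts.le, hc⟩)
          exact this.trans (mul_nonneg hC (hd0 s))
        · calc Z t / Z s * (x s ^ 2 / (1 + x s ^ 2) - y s ^ 2 / (1 + y s ^ 2))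
              ≤ C * (x s ^ 2 / (1 + x s ^ 2) - y s ^ 2 / (1 + y s ^ 2)) :=
              mul_le_mul_of_nonneg_right hZleC hc
            _ ≤ C * d s := mul_le_mul_of_nonneg_left hgle hC
      linarith
    have hneg : (x₀ - y₀) * Z t ≤ 0 :=
      mul_nonpos_iff.mpr (Or.inr ⟨by linarith, (hZpos t ht0).le⟩)
    linarith
  -- Gronwall
  have hdInt : IntegrableOn d (Icc 0 T) := hd_cont.integrableOn_compact isCompact_Icc
  set F : ℝ → ℝ := fun t => ∫ s in (0:ℝ)..t, d s with hFdef
  have hF_nonneg : ∀ t ∈ Icc (0:ℝ) T, 0 ≤ F t := fun t ht =>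
    intervalIntegral.integral_nonneg ht.1 fun s _ => hd0 s
  have hkeyF : ∀ t ∈ Icc (0:ℝ) T, d t ≤ C * F t := by
    intro t ht
    have h1 := key t ht
    have h2 : (∫ s in (0:ℝ)..t, C * d s) = C * F t := intervalIntegral.integral_const_mul _ _
    rw [h2] at h1
    exact max_le h1 (mul_nonneg hC (hF_nonneg t ht))
  have hF_cont : ContinuousOn F (Icc 0 T) := by
    have h := intervalIntegral.continuousOn_primitive (a := 0) (b := T) (μ := volume) hdInt
    refine ContinuousOn.congr h fun t ht => ?_
    exact intervalIntegral.integral_of_le ht.1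
  have hF_deriv : ∀ t ∈ Ico (0:ℝ) T, HasDerivWithinAt F (d t) (Ici t) t := by
    intro t ht
    have htIcc : t ∈ Icc (0:ℝ) T := ⟨ht.1, ht.2.le⟩
    have hmemIoi : Icc (0:ℝ) T ∈ nhdsWithin t (Ioi t) := by
      refine mem_nhdsWithin.2 ⟨Iio T, isOpen_Iio, ht.2, ?_⟩
      intro z hz
      exact ⟨ht.1.trans hz.2.le, hz.1.le⟩
    have hd_int_t : IntervalIntegrable d volume 0 t := by
      rw [intervalIntegrable_iff_integrableOn_Icc_of_le ht.1]
      exact hdInt.mono_set (Icc_subset_Icc_right ht.2.le)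
    have hmeas : StronglyMeasurableAtFilter d (nhdsWithin t (Ioi t)) volume :=
      ⟨Icc 0 T, hmemIoi, hd_cont.aestronglyMeasurable measurableSet_Icc⟩
    have hcwa : ContinuousWithinAt d (Ioi t) t :=
      (hd_cont t htIcc).mono_of_mem_nhdsWithin hmemIoi
    exact intervalIntegral.integral_hasDerivWithinAt_right hd_int_t hmeas hcwa
  have hbound : ∀ t ∈ Ico (0:ℝ) T, ‖d t‖ ≤ C * ‖F t‖ + 0 := by
    intro t ht
    have htIcc : t ∈ Icc (0:ℝ) T := ⟨ht.1, ht.2.le⟩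
    rw [Real.norm_eq_abs, Real.norm_eq_abs, abs_of_nonneg (hd0 t),
      abs_of_nonneg (hF_nonneg t htIcc)]
    linarith [hkeyF t htIcc]
  have hF0 : ‖F 0‖ ≤ (0:ℝ) := by simp [hFdef]
  have hgb := norm_le_gronwallBound_of_norm_deriv_right_le (δ := 0) (K := C) (ε := 0)
    hF_cont hF_deriv hF0 hbound
  have hFzero : ∀ t ∈ Icc (0:ℝ) T, F t = 0 := by
    intro t ht
    have h := hgb t ht
    rw [gronwallBound_ε0, zero_mul] at h
    exact norm_le_zero_iff.mp h
  have hxyle : ∀ s ∈ Icc (0:ℝ) T, x s ≤ y s := by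
    intro s hs
    have h1 := hkeyF s hs
    rw [hFzero s hs, mul_zero] at h1
    have := le_max_left (x s - y s) 0
    linarith [this.trans h1]
  -- conclusion
  have hI1 := hInt u₁ x hu₁_loc hx_cont T hT
  have hI2 := hInt u₂ y hu₂_loc hy_cont T hT
  have hsub : y T - x T = (y₀ - x₀) * Z T
      + ∫ s in (0:ℝ)..T, (Z T / Z s * (u₂ s + y s ^ 2 / (1 + y s ^ 2))
          - Z T / Z s * (u₁ s + x s ^ 2 / (1 + x s ^ 2))) := by
    rw [intervalIntegral.integral_sub hI2 hI1, hx_eq T hT, hy_eq T hT]; ring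
  have hnn : 0 ≤ ∫ s in (0:ℝ)..T, (Z T / Z s * (u₂ s + y s ^ 2 / (1 + y s ^ 2))
      - Z T / Z s * (u₁ s + x s ^ 2 / (1 + x s ^ 2))) := by
    refine intervalIntegral.integral_nonneg hT fun s hs => ?_
    have hs0 : s ∈ Ici (0:ℝ) := hs.1
    have heq : Z T / Z s * (u₂ s + y s ^ 2 / (1 + y s ^ 2))
        - Z T / Z s * (u₁ s + x s ^ 2 / (1 + x s ^ 2))
        = Z T / Z s * ((u₂ s - u₁ s) + (y s ^ 2 / (1 + y s ^ 2) - x s ^ 2 / (1 + x s ^ 2))) := by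
      ring
    rw [heq]
    refine mul_nonneg (div_nonneg (hZpos T hT).le (hZpos s hs0).le) (add_nonneg ?_ ?_)
    · linarith [hu_le s hs0]
    · linarith [g_mono (hx_nonneg s hs0) (hxyle s hs)]
  linarith
end

section
/- Let ρ, σ, Δx be positive real numbers, let b ∈ ℝ and x ≥ 0 satisfy Δx·(x²/(x²+1) − b x) ≤ σ²/2, and let w ∈ ℝ. Define, for c < w and d ∈ ℝ, g(x, w, c, d) = (Δx² − (1/ρ)(x²/(x²+1) − b x)·Δx + σ²/ρ)·w + (1/ρ)(x² + 1)·Δx² + (Δx²/ρ)·ln((w − c)/Δx) + (Δx/ρ)·(x²/(x²+1) − b x)·d − (σ²/(2ρ))·(c + d). Then for all c₁ ≤ c₂ < w and d₁ ≤ d₂, one has g(x, w, c₂, d₂) ≤ g(x, w, c₁, d₁); that is, g is nonincreasing in its last two arguments. -/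
open Real

/-- The finite difference operator of the monotone scheme for the shallow lake HJB equation. -/
noncomputable def schemeG (ρ σ Δx b x w c d : ℝ) : ℝ :=
  (Δx ^ 2 - (1 / ρ) * (x ^ 2 / (x ^ 2 + 1) - b * x) * Δx + σ ^ 2 / ρ) * w
    + (1 / ρ) * (x ^ 2 + 1) * Δx ^ 2
    + (Δx ^ 2 / ρ) * Real.log ((w - c) / Δx)
    + (Δx / ρ) * (x ^ 2 / (x ^ 2 + 1) - b * x) * d
    - (σ ^ 2 / (2 * ρ)) * (c + d)

/-- Monotonicity of the finite difference scheme under the CFL-type condition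
`Δx (x²/(x²+1) − bx) ≤ σ²/2`. -/
theorem schemeG_monotone
    (ρ σ Δx b x w : ℝ) (hρ : 0 < ρ) (hσ : 0 < σ) (hΔx : 0 < Δx)
    (hx : 0 ≤ x) (hCFL : Δx * (x ^ 2 / (x ^ 2 + 1) - b * x) ≤ σ ^ 2 / 2)
    (c₁ c₂ d₁ d₂ : ℝ) (hc : c₁ ≤ c₂) (hcw : c₂ < w) (hd : d₁ ≤ d₂) :
    schemeG ρ σ Δx b x w c₂ d₂ ≤ schemeG ρ σ Δx b x w c₁ d₁ := by
  set μ := x ^ 2 / (x ^ 2 + 1) - b * x with hμ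
  have hlog : Real.log ((w - c₂) / Δx) ≤ Real.log ((w - c₁) / Δx) := by
    apply Real.log_le_log (div_pos (by linarith) hΔx)
    gcongr
  have h1 : (Δx ^ 2 / ρ) * Real.log ((w - c₂) / Δx)
      ≤ (Δx ^ 2 / ρ) * Real.log ((w - c₁) / Δx) := by
    apply mul_le_mul_of_nonneg_left hlog (by positivity)
  have h2 : (Δx * μ - σ ^ 2 / 2) * (d₂ - d₁) ≤ 0 :=
    mul_nonpos_of_nonpos_of_nonneg (by linarith) (by linarith)
  have h3 : (Δx * μ - σ ^ 2 / 2) / ρ * (d₂ - d₁) ≤ 0 := by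
    rw [div_mul_eq_mul_div]
    exact div_nonpos_of_nonpos_of_nonneg h2 hρ.le
  have h4 : σ ^ 2 / (2 * ρ) * (c₂ - c₁) ≥ 0 := mul_nonneg (by positivity) (by linarith)
  unfold schemeG
  rw [← sub_nonneg]
  have key : ((Δx ^ 2 - (1 / ρ) * μ * Δx + σ ^ 2 / ρ) * w
      + (1 / ρ) * (x ^ 2 + 1) * Δx ^ 2
      + (Δx ^ 2 / ρ) * Real.log ((w - c₁) / Δx)
      + (Δx / ρ) * μ * d₁
      - (σ ^ 2 / (2 * ρ)) * (c₁ + d₁))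
      - ((Δx ^ 2 - (1 / ρ) * μ * Δx + σ ^ 2 / ρ) * w
      + (1 / ρ) * (x ^ 2 + 1) * Δx ^ 2
      + (Δx ^ 2 / ρ) * Real.log ((w - c₂) / Δx)
      + (Δx / ρ) * μ * d₂
      - (σ ^ 2 / (2 * ρ)) * (c₂ + d₂))
      = ((Δx ^ 2 / ρ) * Real.log ((w - c₁) / Δx)
        - (Δx ^ 2 / ρ) * Real.log ((w - c₂) / Δx))
        - (Δx * μ - σ ^ 2 / 2) / ρ * (d₂ - d₁)
        + σ ^ 2 / (2 * ρ) * (c₂ - c₁) := by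
    field_simp
    ring
  rw [key]
  linarith
end

section
/- Let x₀ ≥ 0, let Z : [0,∞) → (0,∞) be continuous, and let x : [0,∞) → ℝ be continuous and satisfy, for every t ≥ 0, x(t) = x₀·Z(t) + ∫₀ᵗ (Z(t)/Z(s))·(1 + x(s)/(1 + x(s)²)) ds. Define M(t) = ∫₀ᵗ (Z(t)/Z(s)) ds. Then for all t ≥ 0, x(t)² ≤ x₀²·Z(t)² + 2x₀·Z(t)·M(t) + (9/4)·M(t)² + 2·∫₀ᵗ (Z(t)/Z(s))² ds. -/
open Real Set MeasureTheory intervalIntegral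

/-- Pathwise upper bound for the squared state of the shallow lake dynamics under the
control `u(t) = (1 + x(t))/(1 + x(t)²)`. -/
theorem shallow_lake_squared_state_upper_bound
    (x₀ : ℝ) (hx₀ : 0 ≤ x₀)
    (Z : ℝ → ℝ) (hZcont : ContinuousOn Z (Ici 0)) (hZpos : ∀ t ∈ Ici (0:ℝ), 0 < Z t)
    (x : ℝ → ℝ) (hx_cont : ContinuousOn x (Ici 0))
    (hx_eq : ∀ t ∈ Ici (0:ℝ),
      x t = x₀ * Z t + ∫ s in (0:ℝ)..t, (Z t / Z s) * (1 + x s / (1 + x s ^ 2)))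
    (M : ℝ → ℝ) (hM : ∀ t, M t = ∫ s in (0:ℝ)..t, Z t / Z s) :
    ∀ t ∈ Ici (0:ℝ),
      x t ^ 2 ≤ x₀ ^ 2 * Z t ^ 2 + 2 * x₀ * Z t * M t + (9 / 4) * M t ^ 2
        + 2 * ∫ s in (0:ℝ)..t, (Z t / Z s) ^ 2 := by
  have hden : ∀ y : ℝ, (0:ℝ) < 1 + y ^ 2 := fun y => by positivity
  -- |y/(1+y²)| ≤ 1/2
  have habs : ∀ y : ℝ, -(1/2) ≤ y / (1 + y ^ 2) ∧ y / (1 + y ^ 2) ≤ 1/2 := by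
    intro y
    constructor
    · rw [le_div_iff₀ (hden y)]
      nlinarith [sq_nonneg (y + 1)]
    · rw [div_le_iff₀ (hden y)]
      nlinarith [sq_nonneg (y - 1)]
  -- lower bound x s ≥ x₀ Z s
  have hxlb : ∀ s ∈ Ici (0:ℝ), x₀ * Z s ≤ x s := by
    intro s hs
    rw [hx_eq s hs]
    have h0 : (0:ℝ) ≤ ∫ r in (0:ℝ)..s, (Z s / Z r) * (1 + x r / (1 + x r ^ 2)) := by
      apply intervalIntegral.integral_nonneg hs
      intro r hr
      have hr0 : r ∈ Ici (0:ℝ) := hr.1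
      have hZr := hZpos r hr0
      have hZs := hZpos s hs
      have := (habs (x r)).1
      have hK : 0 ≤ Z s / Z r := le_of_lt (div_pos hZs hZr)
      nlinarith
    linarith
  have hxnn : ∀ s ∈ Ici (0:ℝ), 0 ≤ x s := by
    intro s hs
    have := hxlb s hs
    nlinarith [hZpos s hs]
  -- key pointwise bound for the cross term
  have hkey : ∀ s ∈ Ici (0:ℝ), x₀ * Z s * (x s / (1 + x s ^ 2)) ≤ 1 := by
    intro s hs
    have h1 := hxlb s hs
    have h2 := hxnn s hs
    rw [mul_div_assoc'] at *
    rw [div_le_one (hden (x s))]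
    nlinarith
  intro t ht
  have ht' : (0:ℝ) ≤ t := ht
  have hsub : Icc (0:ℝ) t ⊆ Ici (0:ℝ) := fun s hs => hs.1
  have huIcc : uIcc (0:ℝ) t = Icc 0 t := uIcc_of_le ht'
  have hZt : 0 < Z t := hZpos t ht
  -- continuity facts on [0,t]
  have hKc : ContinuousOn (fun s => Z t / Z s) (Icc 0 t) :=
    continuousOn_const.div (hZcont.mono hsub) (fun s hs => (hZpos s (hsub hs)).ne')
  have hhc : ContinuousOn (fun s => 1 + x s / (1 + x s ^ 2)) (Icc 0 t) := by
    apply continuousOn_const.add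
    exact (hx_cont.mono hsub).div
      (continuousOn_const.add ((hx_cont.mono hsub).pow 2))
      (fun s hs => (hden (x s)).ne')
  have hKi : IntervalIntegrable (fun s => Z t / Z s) volume 0 t := by
    apply ContinuousOn.intervalIntegrable; rwa [huIcc]
  have hK2i : IntervalIntegrable (fun s => (Z t / Z s) ^ 2) volume 0 t := by
    apply ContinuousOn.intervalIntegrable; rw [huIcc]; exact hKc.pow 2
  have hKhi : IntervalIntegrable
      (fun s => (Z t / Z s) * (1 + x s / (1 + x s ^ 2))) volume 0 t := by
    apply ContinuousOn.intervalIntegrable; rw [huIcc]; exact hKc.mul hhc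
  set It : ℝ := ∫ s in (0:ℝ)..t, (Z t / Z s) * (1 + x s / (1 + x s ^ 2)) with hIt
  set Mt : ℝ := ∫ s in (0:ℝ)..t, Z t / Z s with hMt
  set Kt : ℝ := ∫ s in (0:ℝ)..t, (Z t / Z s) ^ 2 with hKt
  -- I ≥ 0
  have hInn : 0 ≤ It := by
    apply intervalIntegral.integral_nonneg ht'
    intro s hs
    have hZs := hZpos s (hsub hs)
    have := (habs (x s)).1
    have hK : 0 ≤ Z t / Z s := le_of_lt (div_pos hZt hZs)
    nlinarith
  -- I ≤ (3/2) M
  have hIub : It ≤ (3/2) * Mt := by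
    have h1 : It ≤ ∫ s in (0:ℝ)..t, (3/2) * (Z t / Z s) := by
      apply intervalIntegral.integral_mono_on ht' hKhi (hKi.const_mul _)
      intro s hs
      have hZs := hZpos s (hsub hs)
      have := (habs (x s)).2
      have hK : 0 ≤ Z t / Z s := le_of_lt (div_pos hZt hZs)
      nlinarith
    rwa [intervalIntegral.integral_const_mul] at h1
  -- cross bound : x₀ Z t · I ≤ x₀ Z t · M + ∫ K²
  have hcross : x₀ * Z t * It ≤ x₀ * Z t * Mt + Kt := by
    have h1 : x₀ * Z t * It
        = ∫ s in (0:ℝ)..t, x₀ * Z t * ((Z t / Z s) * (1 + x s / (1 + x s ^ 2))) := by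
      rw [hIt, intervalIntegral.integral_const_mul]
    have h2 : (∫ s in (0:ℝ)..t, x₀ * Z t * ((Z t / Z s) * (1 + x s / (1 + x s ^ 2))))
        ≤ ∫ s in (0:ℝ)..t, (x₀ * Z t * (Z t / Z s) + (Z t / Z s) ^ 2) := by
      apply intervalIntegral.integral_mono_on ht' (hKhi.const_mul _)
        (((hKi.const_mul _)).add hK2i)
      intro s hs
      have hZs := hZpos s (hsub hs)
      have key := hkey s (hsub hs)
      have hZteq : Z t = (Z t / Z s) * Z s := (div_mul_cancel₀ _ hZs.ne').symm
      set K := Z t / Z s with hKdef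
      set g := x s / (1 + x s ^ 2) with hgdef
      have hKpos : 0 < K := div_pos hZt hZs
      rw [hZteq]
      nlinarith [mul_le_mul_of_nonneg_right key (sq_nonneg K), sq_nonneg K, hZs.le]
    have h3 : (∫ s in (0:ℝ)..t, (x₀ * Z t * (Z t / Z s) + (Z t / Z s) ^ 2))
        = x₀ * Z t * Mt + Kt := by
      rw [intervalIntegral.integral_add (hKi.const_mul _) hK2i,
        intervalIntegral.integral_const_mul]
    linarith [h1 ▸ h2, h3 ▸ h2]
  -- conclude
  have hsq : It ^ 2 ≤ (9/4) * Mt ^ 2 := by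
    have := pow_le_pow_left₀ hInn hIub 2
    nlinarith
  rw [hx_eq t ht, hM t]
  nlinarith [hcross, hsq]
end

section
/- Let x₀ ≥ 0, let Z : [0,∞) → (0,∞) be continuous, let u : [0,∞) → [0,∞) be locally integrable, and let x : [0,∞) → ℝ be continuous and satisfy, for every t ≥ 0, x(t) = x₀·Z(t) + ∫₀ᵗ (Z(t)/Z(s))·(u(s) + x(s)²/(1 + x(s)²)) ds. Define M(t) = ∫₀ᵗ (Z(t)/Z(s)) ds and M_t(u) = ∫₀ᵗ (Z(t)/Z(s))·u(s) ds. Then for all t ≥ 0, x(t)² ≥ x₀²·Z(t)² + 2x₀·Z(t)·M(t) + 2x₀·Z(t)·M_t(u) − ∫₀ᵗ (Z(t)/Z(s))² ds. -/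
open Real Set MeasureTheory intervalIntegral

/-!
Write `x(t) = x₀Z(t) + M_t(u) + B(t)` with `B(t) = ∫₀ᵗ (Z(t)/Z(s)) x(s)²/(1+x(s)²) ds`.
Dropping `(M_t(u) + B(t))²` gives `x(t)² ≥ (x₀Z(t))² + 2x₀Z(t)(M_t(u) + B(t))`, so it suffices that
`2x₀Z(t)(M(t) - B(t)) ≤ ∫₀ᵗ (Z(t)/Z(s))² ds`. As `1 - x²/(1+x²) = 1/(1+x²)`, this holds pointwise
as soon as `2x₀Z(s) ≤ 1 + x(s)²`, which follows from `x(s) ≥ x₀Z(s)` (the integral term is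
nonnegative) and `2x(s) ≤ 1 + x(s)²`.
-/

lemma sq_ge_of_eq_add_add {y a A B M Q : ℝ} (hy : y = a + A + B) (hB : 2 * a * (M - B) ≤ Q) :
    y ^ 2 ≥ a ^ 2 + 2 * a * M + 2 * a * A - Q := by
  subst hy
  nlinarith [sq_nonneg (A + B)]

lemma two_mul_mul_sub_mul_le_sq {c p q y : ℝ} (hq : 0 < q) (hy : c * q ≤ y) :
    2 * (c * p) * (p / q - p / q * (y ^ 2 / (1 + y ^ 2))) ≤ (p / q) ^ 2 := by
  have hden : 0 < 1 + y ^ 2 := by positivity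
  have hcq : 2 * (c * q) ≤ 1 + y ^ 2 := by nlinarith [sq_nonneg (y - 1)]
  calc 2 * (c * p) * (p / q - p / q * (y ^ 2 / (1 + y ^ 2)))
      = 2 * (c * q) / (1 + y ^ 2) * (p / q) ^ 2 := by field_simp; ring
    _ ≤ 1 * (p / q) ^ 2 := by gcongr; exact (div_le_one hden).2 hcq
    _ = (p / q) ^ 2 := one_mul _

lemma two_mul_integral_sub_integral_mul_le {a t : ℝ} {k f : ℝ → ℝ} (ht : 0 ≤ t)
    (hk : ContinuousOn k (Icc 0 t)) (hf : ContinuousOn f (Icc 0 t))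
    (hpt : ∀ s ∈ Icc 0 t, 2 * a * (k s - k s * f s) ≤ k s ^ 2) :
    2 * a * ((∫ s in (0:ℝ)..t, k s) - ∫ s in (0:ℝ)..t, k s * f s) ≤ ∫ s in (0:ℝ)..t, k s ^ 2 := by
  have hk_int : IntervalIntegrable k volume 0 t := hk.intervalIntegrable_of_Icc ht
  have hkf_int : IntervalIntegrable (fun s => k s * f s) volume 0 t :=
    (hk.mul hf).intervalIntegrable_of_Icc ht
  rw [← integral_sub hk_int hkf_int, ← intervalIntegral.integral_const_mul]
  exact integral_mono_on ht ((hk_int.sub hkf_int).const_mul _)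
    ((hk.pow 2).intervalIntegrable_of_Icc ht) hpt

lemma mul_le_of_eq_add_integral {x₀ s : ℝ} {Z u x : ℝ → ℝ} (hs : 0 ≤ s)
    (hZpos : ∀ t ∈ Ici (0:ℝ), 0 < Z t) (hu_nonneg : ∀ t ∈ Ici (0:ℝ), 0 ≤ u t)
    (hx : x s = x₀ * Z s + ∫ r in (0:ℝ)..s, (Z s / Z r) * (u r + x r ^ 2 / (1 + x r ^ 2))) :
    x₀ * Z s ≤ x s := by
  rw [hx]
  refine le_add_of_nonneg_right (integral_nonneg hs fun r hr => ?_)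
  have hZ := hZpos s hs
  have hZr := hZpos r hr.1
  have hur := hu_nonneg r hr.1
  positivity

theorem shallow_lake_squared_state_lower_bound_general
    (x₀ : ℝ)
    (Z : ℝ → ℝ) (hZcont : ContinuousOn Z (Ici 0)) (hZpos : ∀ t ∈ Ici (0:ℝ), 0 < Z t)
    (u : ℝ → ℝ) (hu_nonneg : ∀ t ∈ Ici (0:ℝ), 0 ≤ u t)
    (hu_loc : LocallyIntegrableOn u (Ici 0))
    (x : ℝ → ℝ) (hx_cont : ContinuousOn x (Ici 0))
    (hx_eq : ∀ t ∈ Ici (0:ℝ),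
      x t = x₀ * Z t + ∫ s in (0:ℝ)..t, (Z t / Z s) * (u s + x s ^ 2 / (1 + x s ^ 2)))
    (M : ℝ → ℝ) (hM : ∀ t, M t = ∫ s in (0:ℝ)..t, Z t / Z s)
    (Mu : ℝ → ℝ) (hMu : ∀ t, Mu t = ∫ s in (0:ℝ)..t, (Z t / Z s) * u s) :
    ∀ t ∈ Ici (0:ℝ),
      x t ^ 2 ≥ x₀ ^ 2 * Z t ^ 2 + 2 * x₀ * Z t * M t + 2 * x₀ * Z t * Mu t
        - ∫ s in (0:ℝ)..t, (Z t / Z s) ^ 2 := by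
  intro t (ht : 0 ≤ t)
  have hIcc : Icc 0 t ⊆ Ici (0:ℝ) := fun s hs => hs.1
  have hk : ContinuousOn (fun s => Z t / Z s) (Icc 0 t) :=
    continuousOn_const.div (hZcont.mono hIcc) fun s hs => (hZpos s (hIcc hs)).ne'
  have hf : ContinuousOn (fun s => x s ^ 2 / (1 + x s ^ 2)) (Icc 0 t) :=
    ((hx_cont.mono hIcc).pow 2).div (continuousOn_const.add ((hx_cont.mono hIcc).pow 2))
      fun s _ => by positivity
  have hu_int : IntervalIntegrable u volume 0 t := by
    rw [intervalIntegrable_iff_integrableOn_Ioc_of_le ht]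
    exact (hu_loc.integrableOn_compact_subset hIcc isCompact_Icc).mono_set Ioc_subset_Icc_self
  have hx_split : x t = x₀ * Z t + Mu t + ∫ s in (0:ℝ)..t, Z t / Z s * (x s ^ 2 / (1 + x s ^ 2)) := by
    have hkf_int : IntervalIntegrable (fun s => Z t / Z s * (x s ^ 2 / (1 + x s ^ 2))) volume 0 t :=
      (hk.mul hf).intervalIntegrable_of_Icc ht
    rw [hx_eq t ht, hMu, add_assoc,
      ← integral_add (hu_int.continuousOn_mul (by rwa [uIcc_of_le ht])) hkf_int]
    simp only [mul_add]
  have hkey := two_mul_integral_sub_integral_mul_le (a := x₀ * Z t) ht hk hf fun s hs =>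
    two_mul_mul_sub_mul_le_sq (hZpos s hs.1)
      (mul_le_of_eq_add_integral hs.1 hZpos hu_nonneg (hx_eq s hs.1))
  rw [← hM] at hkey
  convert sq_ge_of_eq_add_add hx_split hkey using 2; ring

/-- Pathwise lower bound for the squared state of the shallow lake dynamics. -/
theorem shallow_lake_squared_state_lower_bound
    (x₀ : ℝ) (hx₀ : 0 ≤ x₀)
    (Z : ℝ → ℝ) (hZcont : ContinuousOn Z (Ici 0)) (hZpos : ∀ t ∈ Ici (0:ℝ), 0 < Z t)
    (u : ℝ → ℝ) (hu_nonneg : ∀ t ∈ Ici (0:ℝ), 0 ≤ u t)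
    (hu_loc : LocallyIntegrableOn u (Ici 0))
    (x : ℝ → ℝ) (hx_cont : ContinuousOn x (Ici 0))
    (hx_eq : ∀ t ∈ Ici (0:ℝ),
      x t = x₀ * Z t + ∫ s in (0:ℝ)..t, (Z t / Z s) * (u s + x s ^ 2 / (1 + x s ^ 2)))
    (M : ℝ → ℝ) (hM : ∀ t, M t = ∫ s in (0:ℝ)..t, Z t / Z s)
    (Mu : ℝ → ℝ) (hMu : ∀ t, Mu t = ∫ s in (0:ℝ)..t, (Z t / Z s) * u s) :
    ∀ t ∈ Ici (0:ℝ),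
      x t ^ 2 ≥ x₀ ^ 2 * Z t ^ 2 + 2 * x₀ * Z t * M t + 2 * x₀ * Z t * Mu t
        - ∫ s in (0:ℝ)..t, (Z t / Z s) ^ 2 :=
  shallow_lake_squared_state_lower_bound_general x₀ Z hZcont hZpos u hu_nonneg hu_loc x hx_cont
    hx_eq M hM Mu hMu
end
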